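/- arXiv:1911.09366 — 4 statements merged into one kernel-verified Lean document; each statement's English description precedes it below -/
import Mathlib

section
/- A₁² = ((b−1)/2)·A₁ + ((b+1)/2)·A₂. -/
/-!
Write `T = A₁ᵀ` and `J = 1 + A₁ + T`. Since `A₁ * T` is symmetric, averaging its expansion with its
transpose puts it in the form `α • 1 + β • (A₁ + T)`. The diagonal (entries are `0`/`1`, so
`(A₁ * T) i i` is a row sum) gives `α = b`, and multiplying by `J` (row and column sums are `b`)
gives `b² = b + 2bβ`, i.e. `β = (b - 1)/2`. Finally `A₁ * A₁ = A₁ * (J - 1 - T) = b • J - A₁ - A₁ * T`.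
-/

open Matrix

variable {ι R K : Type*} [Fintype ι]

section CommRing

variable [CommRing R] {A : Matrix ι ι R} {b : R}

theorem Matrix.mul_of_one_eq_smul (hrow : ∀ i, ∑ j, A i j = b) :
    A * of (fun _ _ => 1) = b • of (fun _ _ : ι => (1 : R)) := by
  ext i j
  simp [mul_apply, hrow]

theorem Matrix.mul_transpose_apply_self_of_zero_one (h01 : ∀ i j, A i j = 0 ∨ A i j = 1) (i : ι) :
    (A * Aᵀ) i i = ∑ j, A i j := by
  refine Finset.sum_congr rfl fun j _ => ?_
  rcases h01 i j with h | h <;> simp [h]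

variable [DecidableEq ι]

theorem Matrix.sum_col_eq_of_add_transpose (hsum : A + Aᵀ = of (fun _ _ => 1) - 1)
    (hrow : ∀ i, ∑ j, A i j = b) (k : ι) :
    ∑ i, A i k = (Fintype.card ι : R) - 1 - b := by
  have h := congrArg (fun M : Matrix ι ι R => ∑ j, M k j) hsum
  simp only [add_apply, transpose_apply, sub_apply, of_apply, one_apply, Finset.sum_add_distrib,
    Finset.sum_sub_distrib, hrow, Finset.sum_const, Finset.card_univ, nsmul_eq_mul, mul_one,
    Finset.sum_ite_eq, Finset.mem_univ, if_true] at h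
  linear_combination h

theorem Matrix.coeff_one_eq_of_mul_transpose_eq [Nonempty ι] {α β : R}
    (h01 : ∀ i j, A i j = 0 ∨ A i j = 1) (hsum : A + Aᵀ = of (fun _ _ => 1) - 1)
    (hrow : ∀ i, ∑ j, A i j = b) (h : A * Aᵀ = α • 1 + β • (A + Aᵀ)) : α = b := by
  obtain ⟨i⟩ := ‹Nonempty ι›
  have hi := congrFun (congrFun h i) i
  rw [mul_transpose_apply_self_of_zero_one h01, hrow, hsum] at hi
  simpa using hi.symm

theorem Matrix.rowSum_mul_self_eq_of_mul_transpose_eq [Nonempty ι] {β : R}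
    (hrow : ∀ i, ∑ j, A i j = b) (hcol : ∀ j, ∑ i, A i j = b)
    (h : A * Aᵀ = b • 1 + β • (A + Aᵀ)) :
    b * b = b + 2 * b * β := by
  have hAJ := mul_of_one_eq_smul hrow
  have hTJ : Aᵀ * of (fun _ _ => 1) = b • of (fun _ _ : ι => (1 : R)) :=
    mul_of_one_eq_smul (A := Aᵀ) hcol
  have hJ := congrArg (· * of (fun _ _ : ι => (1 : R))) h
  simp only [Matrix.mul_assoc, hTJ, Matrix.mul_smul, hAJ, Matrix.add_mul, Matrix.smul_mul,
    Matrix.one_mul] at hJ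
  obtain ⟨i⟩ := ‹Nonempty ι›
  have hi := congrFun (congrFun hJ i) i
  simp only [smul_apply, add_apply, of_apply, smul_eq_mul, mul_one] at hi
  linear_combination hi

theorem Matrix.mul_self_eq_of_mul_transpose_eq_smul_one_add {β : R}
    (hsum : A + Aᵀ = of (fun _ _ => 1) - 1) (hrow : ∀ i, ∑ j, A i j = b)
    (h : A * Aᵀ = b • 1 + β • (A + Aᵀ)) :
    A * A = (b - β - 1) • A + (b - β) • Aᵀ := by
  have hA : A = of (fun _ _ => 1) - 1 - Aᵀ := eq_sub_of_add_eq hsum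
  have hJ : of (fun _ _ : ι => (1 : R)) = 1 + A + Aᵀ := by rw [add_assoc, hsum]; abel
  calc A * A = A * (of (fun _ _ => 1) - 1 - Aᵀ) := by rw [← hA]
    _ = A * of (fun _ _ => 1) - A - A * Aᵀ := by rw [Matrix.mul_sub, Matrix.mul_sub, Matrix.mul_one]
    _ = b • (1 + A + Aᵀ) - A - (b • 1 + β • (A + Aᵀ)) := by
        rw [mul_of_one_eq_smul hrow, hJ, h]
    _ = (b - β - 1) • A + (b - β) • Aᵀ := by module

end CommRing

section Field

variable [DecidableEq ι] [Field K] [NeZero (2 : K)] {A : Matrix ι ι K} {b : K}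

theorem Matrix.mul_transpose_eq_smul_one_add {α β γ : K}
    (h : A * Aᵀ = α • 1 + β • A + γ • Aᵀ) :
    A * Aᵀ = α • 1 + ((β + γ) / 2) • (A + Aᵀ) := by
  have ht : A * Aᵀ = α • 1 + β • Aᵀ + γ • A := by
    simpa [transpose_mul] using congrArg transpose h
  have hβγ : (2 : K) * ((β + γ) / 2) = β + γ := by field_simp
  apply smul_right_injective _ (two_ne_zero' K)
  calc (2 : K) • (A * Aᵀ) = (α • 1 + β • A + γ • Aᵀ) + (α • 1 + β • Aᵀ + γ • A) := by
        rw [two_smul, ← h, ← ht]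
    _ = (2 : K) • (α • 1 + ((β + γ) / 2) • (A + Aᵀ)) := by
        simp only [smul_add, smul_smul, hβγ]
        module

theorem Matrix.mul_self_eq_of_add_transpose_eq [Nonempty ι] (hb : b ≠ 0)
    (hcard : (Fintype.card ι : K) = 2 * b + 1) (h01 : ∀ i j, A i j = 0 ∨ A i j = 1)
    (hsum : A + Aᵀ = of (fun _ _ => 1) - 1) (hrow : ∀ i, ∑ j, A i j = b)
    (hAAt : ∃ α β γ : K, A * Aᵀ = α • 1 + β • A + γ • Aᵀ) :
    A * A = ((b - 1) / 2) • A + ((b + 1) / 2) • Aᵀ := by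
  have hcol (j : ι) : ∑ i, A i j = b := by
    rw [sum_col_eq_of_add_transpose hsum hrow, hcard]
    ring
  obtain ⟨α, β, γ, h⟩ := hAAt
  obtain ⟨β', hsym⟩ : ∃ β', A * Aᵀ = α • 1 + β' • (A + Aᵀ) :=
    ⟨_, mul_transpose_eq_smul_one_add h⟩
  rw [coeff_one_eq_of_mul_transpose_eq h01 hsum hrow hsym] at hsym
  have hβ' : β' = (b - 1) / 2 := by
    have := rowSum_mul_self_eq_of_mul_transpose_eq hrow hcol hsym
    field_simp
    apply mul_left_cancel₀ hb
    linear_combination -this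
  rw [mul_self_eq_of_mul_transpose_eq_smul_one_add hsum hrow hsym, hβ']
  congr 2 <;> field_simp <;> ring

end Field

theorem stmt_0_general (n : ℕ) (hn : 4 ≤ n) (b : ℚ) (hb : b = ((n : ℚ) - 2) / 2)
    (A₁ : Matrix (Fin (n - 1)) (Fin (n - 1)) ℚ)
    (h01 : ∀ i j, A₁ i j = 0 ∨ A₁ i j = 1)
    (hsum : A₁ + A₁ᵀ = (Matrix.of fun _ _ => (1 : ℚ)) - 1)
    (hrow : ∀ i, ∑ j, A₁ i j = b)
    (h12 : ∃ α β γ : ℚ, A₁ * A₁ᵀ = α • (1 : Matrix (Fin (n - 1)) (Fin (n - 1)) ℚ) + β • A₁ + γ • A₁ᵀ) :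
    A₁ * A₁ = ((b - 1) / 2) • A₁ + ((b + 1) / 2) • A₁ᵀ := by
  have : Nonempty (Fin (n - 1)) := ⟨⟨0, by omega⟩⟩
  have hn' : (4 : ℚ) ≤ n := by exact_mod_cast hn
  refine mul_self_eq_of_add_transpose_eq (by rw [hb]; linarith) ?_ h01 hsum hrow h12
  rw [Fintype.card_fin, Nat.cast_sub (by omega), hb]
  push_cast
  ring

theorem stmt_0 (n : ℕ) (hn : 4 ≤ n) (b : ℚ) (hb : b = ((n : ℚ) - 2) / 2)
    (A₁ : Matrix (Fin (n - 1)) (Fin (n - 1)) ℚ)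
    (h01 : ∀ i j, A₁ i j = 0 ∨ A₁ i j = 1)
    (hdiag : ∀ i, A₁ i i = 0)
    (hsum : A₁ + A₁ᵀ = (Matrix.of fun _ _ => (1 : ℚ)) - 1)
    (hrow : ∀ i, ∑ j, A₁ i j = b)
    (h11 : ∃ α β γ : ℚ, A₁ * A₁ = α • (1 : Matrix (Fin (n - 1)) (Fin (n - 1)) ℚ) + β • A₁ + γ • A₁ᵀ)
    (h22 : ∃ α β γ : ℚ, A₁ᵀ * A₁ᵀ = α • (1 : Matrix (Fin (n - 1)) (Fin (n - 1)) ℚ) + β • A₁ + γ • A₁ᵀ)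
    (h12 : ∃ α β γ : ℚ, A₁ * A₁ᵀ = α • (1 : Matrix (Fin (n - 1)) (Fin (n - 1)) ℚ) + β • A₁ + γ • A₁ᵀ)
    (h21 : ∃ α β γ : ℚ, A₁ᵀ * A₁ = α • (1 : Matrix (Fin (n - 1)) (Fin (n - 1)) ℚ) + β • A₁ + γ • A₁ᵀ) :
    A₁ * A₁ = ((b - 1) / 2) • A₁ + ((b + 1) / 2) • A₁ᵀ :=
  stmt_0_general n hn b hb A₁ h01 hsum hrow h12
end

section
/- E² + Ã₁Ã₂ + Ã₂Ã₁ = a·I_n + b·Ã₁ + b·Ã₂. -/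
/-!
Since `E` has all-ones off-diagonal blocks, `E²` is block diagonal with blocks `n - 1` and `J`,
and `Ã₁Ã₂ + Ã₂Ã₁` is `A₁A₂ + A₂A₁ = 2b·I + (b - 1)(J - I)` in the lower block. Writing
`J = I + A₁ + A₂` the lower block becomes `(2b + 1)·I + b·A₁ + b·A₂`, and `2b + 1 = n - 1 = a`.
-/

open Matrix Kronecker

/-- The block matrix `E` with zero diagonal blocks and all-ones off-diagonal blocks. -/
def Etil (n : ℕ) : Matrix (Fin 1 ⊕ Fin (n - 1)) (Fin 1 ⊕ Fin (n - 1)) ℚ :=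
  Matrix.fromBlocks 0 (Matrix.of fun _ _ => 1) (Matrix.of fun _ _ => 1) 0

/-- The block matrix `Ã` with `A` as lower-right block and zeros elsewhere. -/
def Atil {n : ℕ} (A : Matrix (Fin (n - 1)) (Fin (n - 1)) ℚ) :
    Matrix (Fin 1 ⊕ Fin (n - 1)) (Fin 1 ⊕ Fin (n - 1)) ℚ :=
  Matrix.fromBlocks 0 0 0 A

/-- The permutation matrix of the 4-cycle (1,2,3,4). -/
def xD : Matrix (Fin 4) (Fin 4) ℚ := !![0,1,0,0; 0,0,1,0; 0,0,0,1; 1,0,0,0]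

/-- The permutation matrix of (1,2)(3,4). -/
def yD : Matrix (Fin 4) (Fin 4) ℚ := !![0,1,0,0; 1,0,0,0; 0,0,0,1; 0,0,1,0]

/-- `σ_h := I_n ⊗ h`. -/
def sig (n : ℕ) (h : Matrix (Fin 4) (Fin 4) ℚ) :
    Matrix ((Fin 1 ⊕ Fin (n - 1)) × Fin 4) ((Fin 1 ⊕ Fin (n - 1)) × Fin 4) ℚ :=
  (1 : Matrix (Fin 1 ⊕ Fin (n - 1)) (Fin 1 ⊕ Fin (n - 1)) ℚ) ⊗ₖ h

/-- `μ_g := E ⊗ g + Ã₁ ⊗ (g·y) + Ã₂ ⊗ (g·x²·y)`. -/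
def mu {n : ℕ} (A₁ : Matrix (Fin (n - 1)) (Fin (n - 1)) ℚ) (g : Matrix (Fin 4) (Fin 4) ℚ) :
    Matrix ((Fin 1 ⊕ Fin (n - 1)) × Fin 4) ((Fin 1 ⊕ Fin (n - 1)) × Fin 4) ℚ :=
  Etil n ⊗ₖ g + Atil A₁ ⊗ₖ (g * yD) + Atil A₁ᵀ ⊗ₖ (g * xD ^ 2 * yD)

theorem fromBlocks_zero_ones_mul_self {ι κ R : Type*} [Fintype ι] [Fintype κ] [Semiring R] :
    (fromBlocks 0 (of fun _ _ => 1) (of fun _ _ => 1) 0 : Matrix (ι ⊕ κ) (ι ⊕ κ) R) *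
        fromBlocks 0 (of fun _ _ => 1) (of fun _ _ => 1) 0 =
      fromBlocks (of fun _ _ => (Fintype.card κ : R)) 0 0 (of fun _ _ => (Fintype.card ι : R)) := by
  rw [fromBlocks_multiply]
  congr 1 <;> ext <;> simp [mul_apply]

theorem Atil_mul_Atil {n : ℕ} (A B : Matrix (Fin (n - 1)) (Fin (n - 1)) ℚ) :
    Atil A * Atil B = Atil (A * B) := by
  simp [Atil, fromBlocks_multiply]

theorem ones_add_mul_add_mul_swap_eq {ι K : Type*} [Fintype ι] [DecidableEq ι]
    [Field K] [CharZero K] {A₁ A₂ : Matrix ι ι K} {b : K}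
    (hsum : A₁ + A₂ = of (fun _ _ => 1) - 1)
    (h12 : A₁ * A₂ = b • (1 : Matrix ι ι K) + ((b - 1) / 2) • A₁ + ((b - 1) / 2) • A₂)
    (h21 : A₂ * A₁ = b • (1 : Matrix ι ι K) + ((b - 1) / 2) • A₁ + ((b - 1) / 2) • A₂) :
    of (fun _ _ => 1) + A₁ * A₂ + A₂ * A₁ = (2 * b + 1) • (1 : Matrix ι ι K) + b • A₁ + b • A₂ := by
  have hJ : of (fun _ _ => (1 : K)) = A₁ + A₂ + 1 := by rw [hsum]; abel
  rw [h12, h21, hJ]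
  module

theorem stmt_3_general (n : ℕ) (hn : 4 ≤ n) (a b : ℚ)
    (ha : a = (n : ℚ) - 1) (hb : b = ((n : ℚ) - 2) / 2)
    (A₁ : Matrix (Fin (n - 1)) (Fin (n - 1)) ℚ)
    (hsum : A₁ + A₁ᵀ = (Matrix.of fun _ _ => (1 : ℚ)) - 1)
    (h12 : A₁ * A₁ᵀ = b • (1 : Matrix (Fin (n - 1)) (Fin (n - 1)) ℚ)
      + ((b - 1) / 2) • A₁ + ((b - 1) / 2) • A₁ᵀ)
    (h21 : A₁ᵀ * A₁ = b • (1 : Matrix (Fin (n - 1)) (Fin (n - 1)) ℚ)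
      + ((b - 1) / 2) • A₁ + ((b - 1) / 2) • A₁ᵀ) :
    Etil n * Etil n + Atil A₁ * Atil A₁ᵀ + Atil A₁ᵀ * Atil A₁ = a • (1 : Matrix (Fin 1 ⊕ Fin (n - 1)) (Fin 1 ⊕ Fin (n - 1)) ℚ) + b • Atil A₁ + b • Atil A₁ᵀ := by
  have hcard : ((n - 1 : ℕ) : ℚ) = a := by
    rw [ha, Nat.cast_sub (by omega : 1 ≤ n), Nat.cast_one]
  have hlower := ones_add_mul_add_mul_swap_eq hsum h12 h21
  rw [show 2 * b + 1 = a by rw [ha, hb]; ring] at hlower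
  rw [Etil, fromBlocks_zero_ones_mul_self, Atil_mul_Atil, Atil_mul_Atil]
  simp only [Atil, fromBlocks_add, ← fromBlocks_one, fromBlocks_smul, Fintype.card_fin, hcard,
    add_zero, smul_zero, Nat.cast_one, hlower]
  congr
  ext i j
  simp [Subsingleton.elim i j]

theorem stmt_3 (n : ℕ) (hn : 4 ≤ n) (a b : ℚ)
    (ha : a = (n : ℚ) - 1) (hb : b = ((n : ℚ) - 2) / 2)
    (A₁ : Matrix (Fin (n - 1)) (Fin (n - 1)) ℚ)
    (h01 : ∀ i j, A₁ i j = 0 ∨ A₁ i j = 1)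
    (hdiag : ∀ i, A₁ i i = 0)
    (hns : A₁ ≠ A₁ᵀ)
    (hsum : A₁ + A₁ᵀ = (Matrix.of fun _ _ => (1 : ℚ)) - 1)
    (hrow : ∀ i, ∑ j, A₁ i j = b)
    (h11 : A₁ * A₁ = ((b - 1) / 2) • A₁ + ((b + 1) / 2) • A₁ᵀ)
    (h22 : A₁ᵀ * A₁ᵀ = ((b + 1) / 2) • A₁ + ((b - 1) / 2) • A₁ᵀ)
    (h12 : A₁ * A₁ᵀ = b • (1 : Matrix (Fin (n - 1)) (Fin (n - 1)) ℚ)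
      + ((b - 1) / 2) • A₁ + ((b - 1) / 2) • A₁ᵀ)
    (h21 : A₁ᵀ * A₁ = b • (1 : Matrix (Fin (n - 1)) (Fin (n - 1)) ℚ)
      + ((b - 1) / 2) • A₁ + ((b - 1) / 2) • A₁ᵀ) :
    Etil n * Etil n + Atil A₁ * Atil A₁ᵀ + Atil A₁ᵀ * Atil A₁ = a • (1 : Matrix (Fin 1 ⊕ Fin (n - 1)) (Fin 1 ⊕ Fin (n - 1)) ℚ) + b • Atil A₁ + b • Atil A₁ᵀ :=
  stmt_3_general n hn a b ha hb A₁ hsum h12 h21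
end

section
/- The set 𝒟 = {σ_h : h ∈ H} ∪ {μ_g : g ∈ G∖H} is closed under transposition and its elements sum to the all-ones matrix: explicitly, σ_hᵀ = σ_h for every h ∈ H, μ_{xy}ᵀ = μ_{xy}, μ_{x³y}ᵀ = μ_{x³y}, μ_xᵀ = μ_{x³}, and σ_1 + σ_{x²} + σ_y + σ_{x²y} + μ_x + μ_{x³} + μ_{xy} + μ_{x³y} = J_{4n}, the 4n×4n all-ones matrix. -/
open Matrix Kronecker

/-! `H` acts regularly on the four points and so does the coset `G ∖ H = xH`, hence
`∑_H h = ∑_{G∖H} g = J₄`, and `J₄` is fixed by right multiplication with permutation matrices.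
Since `σ_h` and `μ_g` are linear in `h` and `g`, the total sum is `(I + E + Ã₁ + Ã₂) ⊗ J₄ = J_n ⊗ J₄`.
Transposition swaps the `Ã₁`- and `Ã₂`-components of `μ_g` and inverts the permutation matrices;
the coefficients match because every `g ∉ H = C_G(y)` conjugates `y` to `x²y`. -/

section Kronecker

variable {R l m p q : Type*}

lemma of_one_kronecker_of_one [MulOneClass R] :
    (of fun (_ : l) (_ : m) => (1 : R)) ⊗ₖ (of fun (_ : p) (_ : q) => (1 : R)) =
      of fun _ _ => 1 := by
  ext
  simp

end Kronecker

lemma transpose_Etil (n : ℕ) : (Etil n)ᵀ = Etil n := by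
  ext (i | i) (j | j) <;> rfl

lemma transpose_Atil {n : ℕ} (A : Matrix (Fin (n - 1)) (Fin (n - 1)) ℚ) :
    (Atil A)ᵀ = Atil Aᵀ := by
  simp [Atil, fromBlocks_transpose]

lemma one_add_Etil_add_Atil_add_Atil_transpose {n : ℕ} (A : Matrix (Fin (n - 1)) (Fin (n - 1)) ℚ)
    (hA : A + Aᵀ = (of fun _ _ => (1 : ℚ)) - 1) :
    1 + Etil n + Atil A + Atil Aᵀ = of fun _ _ => 1 := by
  have hJ : (of fun _ _ => (1 : ℚ) : Matrix (Fin 1 ⊕ Fin (n - 1)) (Fin 1 ⊕ Fin (n - 1)) ℚ) =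
      fromBlocks (of fun _ _ => 1) (of fun _ _ => 1) (of fun _ _ => 1) (of fun _ _ => 1) := by
    ext (i | i) (j | j) <;> rfl
  rw [hJ, Etil, Atil, Atil, ← fromBlocks_one, fromBlocks_add, fromBlocks_add, fromBlocks_add,
    add_assoc _ A, hA]
  have h11 : (1 : Matrix (Fin 1) (Fin 1) ℚ) = of fun _ _ => 1 := by
    ext i j
    simp [Subsingleton.elim i j, one_apply]
  simp only [add_zero, zero_add, add_sub_cancel, h11]

lemma sig_add (n : ℕ) (h h' : Matrix (Fin 4) (Fin 4) ℚ) :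
    sig n (h + h') = sig n h + sig n h' :=
  kronecker_add _ _ _

lemma mu_add {n : ℕ} (A : Matrix (Fin (n - 1)) (Fin (n - 1)) ℚ) (g g' : Matrix (Fin 4) (Fin 4) ℚ) :
    mu A (g + g') = mu A g + mu A g' := by
  simp only [mu, add_mul, kronecker_add]
  abel

lemma transpose_sig (n : ℕ) {h : Matrix (Fin 4) (Fin 4) ℚ} (hh : hᵀ = h) :
    (sig n h)ᵀ = sig n h := by
  rw [sig, ← kroneckerMap_transpose, transpose_one, hh]

lemma transpose_mu {n : ℕ} (A : Matrix (Fin (n - 1)) (Fin (n - 1)) ℚ)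
    {g g' : Matrix (Fin 4) (Fin 4) ℚ} (hg : gᵀ = g')
    (hgy : (g * yD)ᵀ = g' * xD ^ 2 * yD) (hgx : (g * xD ^ 2 * yD)ᵀ = g' * yD) :
    (mu A g)ᵀ = mu A g' := by
  simp only [mu, transpose_add, ← kroneckerMap_transpose, transpose_Etil, transpose_Atil,
    transpose_transpose, hg, hgy, hgx]
  abel

lemma mu_of_one {n : ℕ} (A : Matrix (Fin (n - 1)) (Fin (n - 1)) ℚ) :
    mu A (of fun _ _ => 1) = (Etil n + Atil A + Atil Aᵀ) ⊗ₖ of fun _ _ => 1 := by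
  have hy : (of fun _ _ => 1) * yD = of fun _ _ => 1 := by
    ext i j; fin_cases i <;> fin_cases j <;> simp [yD, mul_apply, Fin.sum_univ_four]
  have hx : (of fun _ _ => 1) * xD = of fun _ _ => 1 := by
    ext i j; fin_cases i <;> fin_cases j <;> simp [xD, mul_apply, Fin.sum_univ_four]
  rw [mu, pow_two, ← mul_assoc, hx, hx, hy, add_kronecker, add_kronecker]

lemma sum_subgroup_eq_of_one :
    (1 : Matrix (Fin 4) (Fin 4) ℚ) + xD ^ 2 + yD + xD ^ 2 * yD = of fun _ _ => 1 := by
  ext i j; fin_cases i <;> fin_cases j <;>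
    simp [xD, yD, pow_succ, one_apply]

lemma sum_coset_eq_of_one :
    xD + xD ^ 3 + xD * yD + xD ^ 3 * yD = of fun _ _ => 1 := by
  ext i j; fin_cases i <;> fin_cases j <;> simp [xD, yD, pow_succ]

lemma transpose_sig_of_mem_subgroup (n : ℕ) :
    ∀ h ∈ ({1, xD ^ 2, yD, xD ^ 2 * yD} : Set (Matrix (Fin 4) (Fin 4) ℚ)),
      (sig n h)ᵀ = sig n h := by
  simp only [Set.forall_mem_insert, Set.mem_singleton_iff, forall_eq]
  refine ⟨transpose_sig n transpose_one, ?_, ?_, ?_⟩ <;> apply transpose_sig <;>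
    ext i j <;> fin_cases i <;> fin_cases j <;> simp [xD, yD, pow_succ]

lemma transpose_mu_xD_mul_yD {n : ℕ} (A : Matrix (Fin (n - 1)) (Fin (n - 1)) ℚ) :
    (mu A (xD * yD))ᵀ = mu A (xD * yD) := by
  apply transpose_mu <;> ext i j <;> fin_cases i <;> fin_cases j <;> simp [xD, yD, pow_succ]

lemma transpose_mu_xD_pow_three_mul_yD {n : ℕ} (A : Matrix (Fin (n - 1)) (Fin (n - 1)) ℚ) :
    (mu A (xD ^ 3 * yD))ᵀ = mu A (xD ^ 3 * yD) := by
  apply transpose_mu <;> ext i j <;> fin_cases i <;> fin_cases j <;> simp [xD, yD, pow_succ]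

lemma transpose_mu_xD {n : ℕ} (A : Matrix (Fin (n - 1)) (Fin (n - 1)) ℚ) :
    (mu A xD)ᵀ = mu A (xD ^ 3) := by
  apply transpose_mu <;> ext i j <;> fin_cases i <;> fin_cases j <;> simp [xD, yD, pow_succ]

theorem stmt_6_general (n : ℕ)
    (A₁ : Matrix (Fin (n - 1)) (Fin (n - 1)) ℚ)
    (hsum : A₁ + A₁ᵀ = (Matrix.of fun _ _ => (1 : ℚ)) - 1) :
    (∀ h ∈ ({1, xD ^ 2, yD, xD ^ 2 * yD} : Set (Matrix (Fin 4) (Fin 4) ℚ)), (sig n h)ᵀ = sig n h) ∧ (mu A₁ (xD * yD))ᵀ = mu A₁ (xD * yD) ∧ (mu A₁ (xD ^ 3 * yD))ᵀ = mu A₁ (xD ^ 3 * yD) ∧ (mu A₁ xD)ᵀ = mu A₁ (xD ^ 3) ∧ sig n 1 + sig n (xD ^ 2) + sig n yD + sig n (xD ^ 2 * yD) + mu A₁ xD + mu A₁ (xD ^ 3) + mu A₁ (xD * yD) + mu A₁ (xD ^ 3 * yD) = Matrix.of fun _ _ => 1 := by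
  refine ⟨transpose_sig_of_mem_subgroup n, transpose_mu_xD_mul_yD A₁,
    transpose_mu_xD_pow_three_mul_yD A₁, transpose_mu_xD A₁, ?_⟩
  calc _ = sig n (1 + xD ^ 2 + yD + xD ^ 2 * yD) + mu A₁ (xD + xD ^ 3 + xD * yD + xD ^ 3 * yD) := by
        simp only [sig_add, mu_add]
        abel
    _ = (1 + Etil n + Atil A₁ + Atil A₁ᵀ) ⊗ₖ of fun _ _ => 1 := by
        rw [sum_subgroup_eq_of_one, sum_coset_eq_of_one, mu_of_one, sig, ← add_kronecker,
          ← add_assoc, ← add_assoc]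
    _ = of fun _ _ => 1 := by
        rw [one_add_Etil_add_Atil_add_Atil_transpose A₁ hsum, of_one_kronecker_of_one]

theorem stmt_6 (n : ℕ) (hn : 4 ≤ n) (a b : ℚ)
    (ha : a = (n : ℚ) - 1) (hb : b = ((n : ℚ) - 2) / 2)
    (A₁ : Matrix (Fin (n - 1)) (Fin (n - 1)) ℚ)
    (h01 : ∀ i j, A₁ i j = 0 ∨ A₁ i j = 1)
    (hdiag : ∀ i, A₁ i i = 0)
    (hns : A₁ ≠ A₁ᵀ)
    (hsum : A₁ + A₁ᵀ = (Matrix.of fun _ _ => (1 : ℚ)) - 1)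
    (hrow : ∀ i, ∑ j, A₁ i j = b)
    (h11 : A₁ * A₁ = ((b - 1) / 2) • A₁ + ((b + 1) / 2) • A₁ᵀ)
    (h22 : A₁ᵀ * A₁ᵀ = ((b + 1) / 2) • A₁ + ((b - 1) / 2) • A₁ᵀ)
    (h12 : A₁ * A₁ᵀ = b • (1 : Matrix (Fin (n - 1)) (Fin (n - 1)) ℚ)
      + ((b - 1) / 2) • A₁ + ((b - 1) / 2) • A₁ᵀ)
    (h21 : A₁ᵀ * A₁ = b • (1 : Matrix (Fin (n - 1)) (Fin (n - 1)) ℚ)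
      + ((b - 1) / 2) • A₁ + ((b - 1) / 2) • A₁ᵀ) :
    (∀ h ∈ ({1, xD ^ 2, yD, xD ^ 2 * yD} : Set (Matrix (Fin 4) (Fin 4) ℚ)), (sig n h)ᵀ = sig n h) ∧ (mu A₁ (xD * yD))ᵀ = mu A₁ (xD * yD) ∧ (mu A₁ (xD ^ 3 * yD))ᵀ = mu A₁ (xD ^ 3 * yD) ∧ (mu A₁ xD)ᵀ = mu A₁ (xD ^ 3) ∧ sig n 1 + sig n (xD ^ 2) + sig n yD + sig n (xD ^ 2 * yD) + mu A₁ xD + mu A₁ (xD ^ 3) + mu A₁ (xD * yD) + mu A₁ (xD ^ 3 * yD) = Matrix.of fun _ _ => 1 :=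
  stmt_6_general n A₁ hsum
end

section
/- There is a surjective ℂ-algebra homomorphism T from the ℂ-subalgebra of 4n×4n complex matrices spanned by the eight matrices σ_1, σ_{x²}, σ_y, σ_{x²y}, μ_x, μ_{x³}, μ_{xy}, μ_{x³y} (regarded as complex matrices) onto M₂(ℂ) satisfying T(σ_1) = I₂, T(σ_{x²}) = −I₂, T(σ_y) = [[1,0],[0,−1]], and T(μ_x) = [[0,−1],[a,0]] (this is the irreducible 2-dimensional representation of 𝒟). -/
open Matrix Kronecker Quaternion

noncomputable section
namespace S16
abbrev c : ℚ → ℂ := ((↑·) : ℚ → ℂ)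

def ee : Fin 4 → ℂ := ![1,1,-1,-1]
def ff : Fin 4 → ℂ := ![1,-1,-1,1]
def uu (n : ℕ) : (Fin 1 ⊕ Fin (n-1)) → ℂ := Sum.elim (fun _ => 1) (fun _ => 0)
def ww (n : ℕ) (a : ℚ) : (Fin 1 ⊕ Fin (n-1)) → ℂ := Sum.elim (fun _ => 0) (fun _ => ((a:ℂ))⁻¹)
def PP (n : ℕ) (a : ℚ) : Matrix ((Fin 1 ⊕ Fin (n-1)) × Fin 4) (Fin 2) ℂ :=
  Matrix.of fun p k => ![uu n p.1 * ee p.2, ww n a p.1 * ff p.2] k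

lemma map_mul' (M N : Matrix (Fin 4) (Fin 4) ℚ) : (M * N).map c = M.map c * N.map c :=
  Matrix.map_mul (f := Rat.castHom ℂ)

lemma xe : (xD.map c) *ᵥ ee = ff := by
  funext j
  fin_cases j <;>
    simp [xD, ee, ff, mulVec, dotProduct, Fin.sum_univ_four, Matrix.map_apply, c]

lemma xf : (xD.map c) *ᵥ ff = -ee := by
  funext j
  fin_cases j <;>
    simp [xD, ee, ff, mulVec, dotProduct, Fin.sum_univ_four, Matrix.map_apply, c]

lemma ye : (yD.map c) *ᵥ ee = ee := by
  funext j
  fin_cases j <;>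
    simp [yD, ee, ff, mulVec, dotProduct, Fin.sum_univ_four, Matrix.map_apply, c]

lemma yf : (yD.map c) *ᵥ ff = -ff := by
  funext j
  fin_cases j <;>
    simp [yD, ee, ff, mulVec, dotProduct, Fin.sum_univ_four, Matrix.map_apply, c]

lemma pow2 : (xD^2 : Matrix (Fin 4) (Fin 4) ℚ) = xD * xD := by rw [pow_two]
lemma pow3 : (xD^3 : Matrix (Fin 4) (Fin 4) ℚ) = xD * (xD * xD) := by
  rw [pow_succ, pow_two, mul_assoc]

lemma kron_mulVec {m p : Type*} [Fintype m] [Fintype p] (X : Matrix m m ℂ) (Y : Matrix p p ℂ)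
    (s : m → ℂ) (t : p → ℂ) :
    (X ⊗ₖ Y) *ᵥ (fun q : m × p => s q.1 * t q.2) = fun q => (X *ᵥ s) q.1 * (Y *ᵥ t) q.2 := by
  funext q
  simp only [mulVec, dotProduct, kroneckerMap_apply, Fintype.sum_prod_type, kronecker_apply]
  rw [Finset.sum_mul_sum]
  exact Finset.sum_congr rfl fun i _ => Finset.sum_congr rfl fun j _ => by ring

section main
variable {n : ℕ} (hn : 4 ≤ n) (a b : ℚ) (ha : a = (n:ℚ) - 1) (hb : b = ((n:ℚ) - 2)/2)
  (A₁ : Matrix (Fin (n - 1)) (Fin (n - 1)) ℚ)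
  (hsum : A₁ + A₁ᵀ = (Matrix.of fun _ _ => (1 : ℚ)) - 1)
  (hrow : ∀ i, ∑ j, A₁ i j = b)

include ha hn in
lemma hane : (a : ℂ) ≠ 0 := by
  have : (4:ℚ) ≤ (n:ℚ) := by exact_mod_cast hn
  subst ha; push_cast
  intro h
  have : (n:ℂ) = 1 := by linear_combination h
  have : (n:ℚ) = 1 := by exact_mod_cast this
  linarith

include ha hn in
lemma L1 : (Etil n).map c *ᵥ uu n + (Atil A₁).map c *ᵥ uu n - (Atil A₁ᵀ).map c *ᵥ uu n
    = (a:ℂ) • ww n a := by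
  have hva := hane hn a ha
  funext i
  cases i with
  | inl i =>
    simp [mulVec, dotProduct, Fintype.sum_sum_type, uu, ww, Etil, Atil, Matrix.map_apply,
      Matrix.fromBlocks_apply₁₁, Matrix.fromBlocks_apply₁₂]
  | inr i =>
    simp [mulVec, dotProduct, Fintype.sum_sum_type, uu, ww, Etil, Atil, Matrix.map_apply,
      Matrix.fromBlocks_apply₂₁, Matrix.fromBlocks_apply₂₂]
    field_simp

include ha hb hn hsum hrow in
lemma L2 : (Etil n).map c *ᵥ ww n a - (Atil A₁).map c *ᵥ ww n a + (Atil A₁ᵀ).map c *ᵥ ww n a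
    = uu n := by
  have hva := hane hn a ha
  have hcard : ((Fintype.card (Fin (n-1)) : ℚ)) = a := by
    rw [Fintype.card_fin, ha]
    have : ((n - 1 : ℕ) : ℚ) = (n:ℚ) - 1 := by
      push_cast [Nat.cast_sub (by omega : 1 ≤ n)]; ring
    rw [this]
  have hcol : ∀ i, ∑ j, A₁ j i = b := by
    intro i
    have h2 : ∑ j, (A₁ + A₁ᵀ) i j
        = ∑ j, (((Matrix.of fun _ _ => (1:ℚ)) - 1 : Matrix (Fin (n-1)) (Fin (n-1)) ℚ)) i j := by
      rw [hsum]
    have h3 : ∑ j, (A₁ + A₁ᵀ) i j = b + ∑ j, A₁ j i := by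
      simp [Matrix.add_apply, Finset.sum_add_distrib, hrow, Matrix.transpose_apply]
    have h4 : ∑ j, (((Matrix.of fun _ _ => (1:ℚ)) - 1 : Matrix (Fin (n-1)) (Fin (n-1)) ℚ)) i j
        = (n:ℚ) - 2 := by
      simp [Matrix.sub_apply, Matrix.one_apply, Finset.sum_sub_distrib, Finset.sum_ite_eq',
        Fintype.card_fin]
      have h1n : ((n - 1 : ℕ) : ℚ) = (n:ℚ) - 1 := by
        push_cast [Nat.cast_sub (by omega : 1 ≤ n)]; ring
      rw [h1n]; ring
    have : b + ∑ j, A₁ j i = (n:ℚ) - 2 := by rw [← h3, h2, h4]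
    rw [hb] at this ⊢; linarith
  funext i
  cases i with
  | inl i =>
    simp [mulVec, dotProduct, Fintype.sum_sum_type, uu, ww, Etil, Atil, Matrix.map_apply,
      Matrix.fromBlocks_apply₁₁, Matrix.fromBlocks_apply₁₂]
    have h1n : ((n - 1 : ℕ) : ℂ) = (a:ℂ) := by
      have := hcard; rw [Fintype.card_fin] at this; exact_mod_cast congrArg (c) this
    rw [h1n]
    field_simp
  | inr i =>
    simp [mulVec, dotProduct, Fintype.sum_sum_type, uu, ww, Etil, Atil, Matrix.map_apply,
      Matrix.fromBlocks_apply₂₁, Matrix.fromBlocks_apply₂₂, Matrix.transpose_apply]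
    rw [← Finset.sum_mul, ← Finset.sum_mul, ← Rat.cast_sum, ← Rat.cast_sum, hrow, hcol i]
    ring


lemma mulP (M : Matrix ((Fin 1 ⊕ Fin (n-1)) × Fin 4) ((Fin 1 ⊕ Fin (n-1)) × Fin 4) ℂ)
    (C : Matrix (Fin 2) (Fin 2) ℂ)
    (h0 : M *ᵥ (fun q => uu n q.1 * ee q.2)
      = fun q => C 0 0 * (uu n q.1 * ee q.2) + C 1 0 * (ww n a q.1 * ff q.2))
    (h1 : M *ᵥ (fun q => ww n a q.1 * ff q.2)
      = fun q => C 0 1 * (uu n q.1 * ee q.2) + C 1 1 * (ww n a q.1 * ff q.2)) :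
    M * PP n a = PP n a * C := by
  ext p k
  fin_cases k
  · have hL : (M * PP n a) p ⟨0, by omega⟩ = (M *ᵥ fun q => uu n q.1 * ee q.2) p := by
      simp [Matrix.mul_apply, mulVec, dotProduct, PP]
    rw [hL, h0]
    simp [PP, Matrix.mul_apply, Fin.sum_univ_two]
    ring
  · have hL : (M * PP n a) p ⟨1, by omega⟩ = (M *ᵥ fun q => ww n a q.1 * ff q.2) p := by
      simp [Matrix.mul_apply, mulVec, dotProduct, PP]
    rw [hL, h1]
    simp [PP, Matrix.mul_apply, Fin.sum_univ_two]
    ring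

lemma kmap {m p m' p' : Type*} (A : Matrix m m' ℚ) (B : Matrix p p' ℚ) :
    (A ⊗ₖ B).map c = (A.map c) ⊗ₖ (B.map c) := by
  ext ⟨i,j⟩ ⟨i',j'⟩
  simp [kroneckerMap_apply, Matrix.map_apply, c]

lemma sigP (h : Matrix (Fin 4) (Fin 4) ℚ) (α β : ℂ)
    (hhe : h.map c *ᵥ ee = α • ee) (hhf : h.map c *ᵥ ff = β • ff) :
    (sig n h).map c * PP n a = PP n a * !![α, 0; 0, β] := by
  apply mulP
  · rw [sig, kmap, show ((1 : Matrix (Fin 1 ⊕ Fin (n-1)) (Fin 1 ⊕ Fin (n-1)) ℚ)).map c = 1 from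
      Matrix.map_one c (by norm_num) (by norm_num), kron_mulVec, Matrix.one_mulVec, hhe]
    funext q
    simp [Pi.smul_apply, smul_eq_mul]
    ring
  · rw [sig, kmap, show ((1 : Matrix (Fin 1 ⊕ Fin (n-1)) (Fin 1 ⊕ Fin (n-1)) ℚ)).map c = 1 from
      Matrix.map_one c (by norm_num) (by norm_num), kron_mulVec, Matrix.one_mulVec, hhf]
    funext q
    simp [Pi.smul_apply, smul_eq_mul]
    ring

lemma x2e : ((xD^2).map c) *ᵥ ee = -ee := by
  rw [pow2, map_mul', ← mulVec_mulVec, xe, xf]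
lemma x2f : ((xD^2).map c) *ᵥ ff = -ff := by
  rw [pow2, map_mul', ← mulVec_mulVec, xf, Matrix.mulVec_neg, xe]

include ha hb hn hsum hrow in
lemma muP (g : Matrix (Fin 4) (Fin 4) ℚ) (ε δ : ℂ)
    (hge : g.map c *ᵥ ee = ε • ff) (hgf : g.map c *ᵥ ff = δ • ee) :
    (mu A₁ g).map c * PP n a = PP n a * !![0, δ; ε * (a:ℂ), 0] := by
  have hL1 := L1 hn a ha A₁
  have hL2 := L2 hn a b ha hb A₁ hsum hrow
  have hmap : (mu A₁ g).map c = (Etil n).map c ⊗ₖ g.map c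
      + (Atil A₁).map c ⊗ₖ (g * yD).map c + (Atil A₁ᵀ).map c ⊗ₖ (g * xD^2 * yD).map c := by
    rw [mu]
    rw [show ∀ X Y : Matrix ((Fin 1 ⊕ Fin (n-1)) × Fin 4) ((Fin 1 ⊕ Fin (n-1)) × Fin 4) ℚ,
      (X + Y).map c = X.map c + Y.map c from fun X Y => Matrix.map_add _ (by intros; push_cast; ring) _ _,
      show ∀ X Y : Matrix ((Fin 1 ⊕ Fin (n-1)) × Fin 4) ((Fin 1 ⊕ Fin (n-1)) × Fin 4) ℚ,
      (X + Y).map c = X.map c + Y.map c from fun X Y => Matrix.map_add _ (by intros; push_cast; ring) _ _,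
      kmap, kmap, kmap]
  have h1 : (g * yD).map c *ᵥ ee = ε • ff := by
    rw [map_mul', ← mulVec_mulVec, ye, hge]
  have h2 : (g * yD).map c *ᵥ ff = (-δ) • ee := by
    rw [map_mul', ← mulVec_mulVec, yf, Matrix.mulVec_neg, hgf, neg_smul]
  have h3 : (g * xD^2 * yD).map c *ᵥ ee = (-ε) • ff := by
    rw [map_mul', map_mul', ← mulVec_mulVec, ← mulVec_mulVec, ye, x2e, Matrix.mulVec_neg, hge,
      neg_smul]
  have h4 : (g * xD^2 * yD).map c *ᵥ ff = δ • ee := by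
    rw [map_mul', map_mul', ← mulVec_mulVec, ← mulVec_mulVec, yf, Matrix.mulVec_neg, x2f,
      neg_neg, hgf]
  apply mulP
  · rw [hmap, add_mulVec, add_mulVec, kron_mulVec, kron_mulVec, kron_mulVec, hge, h1, h3]
    funext q
    have hw := congrFun hL1 q.1
    simp only [Pi.add_apply, Pi.sub_apply, Pi.smul_apply, smul_eq_mul] at hw ⊢
    simp only [Matrix.cons_val', Matrix.cons_val_zero, Matrix.cons_val_one, Matrix.head_cons,
      Matrix.empty_val', Matrix.cons_val_fin_one, Matrix.head_fin_const, Matrix.of_apply]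
    linear_combination ε * ff q.2 * hw
  · rw [hmap, add_mulVec, add_mulVec, kron_mulVec, kron_mulVec, kron_mulVec, hgf, h2, h4]
    funext q
    have hw := congrFun hL2 q.1
    simp only [Pi.add_apply, Pi.sub_apply, Pi.smul_apply, smul_eq_mul] at hw ⊢
    simp only [Matrix.cons_val', Matrix.cons_val_zero, Matrix.cons_val_one, Matrix.head_cons,
      Matrix.empty_val', Matrix.cons_val_fin_one, Matrix.head_fin_const, Matrix.of_apply]
    linear_combination δ * ee q.2 * hw

def QQ (a : ℚ) (i₀ : Fin (n-1)) : Matrix (Fin 2) ((Fin 1 ⊕ Fin (n-1)) × Fin 4) ℂ :=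
  Matrix.of fun k p =>
    ![Sum.elim (fun _ => (4:ℂ)⁻¹ * ee p.2) (fun _ => 0) p.1,
      Sum.elim (fun _ => (0:ℂ)) (fun i => if i = i₀ then ((a:ℂ)/4) * ff p.2 else 0) p.1] k

include ha hn in
lemma QP (i₀ : Fin (n-1)) : QQ (n := n) a i₀ * PP n a = 1 := by
  have hva := hane hn a ha
  ext k m
  fin_cases k <;> fin_cases m <;>
    simp [QQ, PP, Matrix.mul_apply, Fintype.sum_prod_type, Fintype.sum_sum_type,
      Fin.sum_univ_four, uu, ww, ee, ff, Matrix.one_apply, ite_mul, zero_mul,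
      Finset.sum_ite_eq', Finset.sum_sub_distrib, mul_comm]
  · norm_num
  · rw [Finset.sum_eq_single i₀ (by intro b _ hb; simp [hb]) (by simp)]
    simp
    field_simp
    ring

end main
end S16

end

set_option maxHeartbeats 1000000 in
theorem stmt_16 (n : ℕ) (hn : 4 ≤ n) (a b : ℚ)
    (ha : a = (n : ℚ) - 1) (hb : b = ((n : ℚ) - 2) / 2)
    (A₁ : Matrix (Fin (n - 1)) (Fin (n - 1)) ℚ)
    (h01 : ∀ i j, A₁ i j = 0 ∨ A₁ i j = 1)
    (hdiag : ∀ i, A₁ i i = 0)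
    (hns : A₁ ≠ A₁ᵀ)
    (hsum : A₁ + A₁ᵀ = (Matrix.of fun _ _ => (1 : ℚ)) - 1)
    (hrow : ∀ i, ∑ j, A₁ i j = b)
    (h11 : A₁ * A₁ = ((b - 1) / 2) • A₁ + ((b + 1) / 2) • A₁ᵀ)
    (h22 : A₁ᵀ * A₁ᵀ = ((b + 1) / 2) • A₁ + ((b - 1) / 2) • A₁ᵀ)
    (h12 : A₁ * A₁ᵀ = b • (1 : Matrix (Fin (n - 1)) (Fin (n - 1)) ℚ)
      + ((b - 1) / 2) • A₁ + ((b - 1) / 2) • A₁ᵀ)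
    (h21 : A₁ᵀ * A₁ = b • (1 : Matrix (Fin (n - 1)) (Fin (n - 1)) ℚ)
      + ((b - 1) / 2) • A₁ + ((b - 1) / 2) • A₁ᵀ) :
    ∀ S : Set (Matrix ((Fin 1 ⊕ Fin (n - 1)) × Fin 4) ((Fin 1 ⊕ Fin (n - 1)) × Fin 4) ℂ),
      S = {(sig n 1).map ((↑·) : ℚ → ℂ), (sig n (xD ^ 2)).map ((↑·) : ℚ → ℂ),
        (sig n yD).map ((↑·) : ℚ → ℂ), (sig n (xD ^ 2 * yD)).map ((↑·) : ℚ → ℂ),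
        (mu A₁ xD).map ((↑·) : ℚ → ℂ), (mu A₁ (xD ^ 3)).map ((↑·) : ℚ → ℂ),
        (mu A₁ (xD * yD)).map ((↑·) : ℚ → ℂ), (mu A₁ (xD ^ 3 * yD)).map ((↑·) : ℚ → ℂ)} →
      ∃ T : Algebra.adjoin ℂ S →ₐ[ℂ] Matrix (Fin 2) (Fin 2) ℂ,
        Function.Surjective T ∧
        (∀ u : Algebra.adjoin ℂ S, (u : Matrix ((Fin 1 ⊕ Fin (n - 1)) × Fin 4) ((Fin 1 ⊕ Fin (n - 1)) × Fin 4) ℂ) = (sig n 1).map ((↑·) : ℚ → ℂ) → T u = 1) ∧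
        (∀ u : Algebra.adjoin ℂ S, (u : Matrix ((Fin 1 ⊕ Fin (n - 1)) × Fin 4) ((Fin 1 ⊕ Fin (n - 1)) × Fin 4) ℂ) = (sig n (xD ^ 2)).map ((↑·) : ℚ → ℂ) → T u = -1) ∧
        (∀ u : Algebra.adjoin ℂ S, (u : Matrix ((Fin 1 ⊕ Fin (n - 1)) × Fin 4) ((Fin 1 ⊕ Fin (n - 1)) × Fin 4) ℂ) = (sig n yD).map ((↑·) : ℚ → ℂ) →
          T u = !![1, 0; 0, -1]) ∧
        (∀ u : Algebra.adjoin ℂ S, (u : Matrix ((Fin 1 ⊕ Fin (n - 1)) × Fin 4) ((Fin 1 ⊕ Fin (n - 1)) × Fin 4) ℂ) = (mu A₁ xD).map ((↑·) : ℚ → ℂ) →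
          T u = !![0, -1; (a : ℂ), 0]) := by
  intro S hS
  have hva : (a : ℂ) ≠ 0 := S16.hane hn a ha
  set i0 : Fin (n - 1) := ⟨0, by omega⟩ with hi0
  set P' := S16.PP n a with hP'
  set Q' := S16.QQ (n := n) a i0 with hQ'
  have hQP : Q' * P' = 1 := S16.QP hn a ha i0
  -- Fin 4 action facts
  have e1 : ((1 : Matrix (Fin 4) (Fin 4) ℚ)).map S16.c *ᵥ S16.ee = (1:ℂ) • S16.ee := by
    rw [Matrix.map_one S16.c (by norm_num) (by norm_num), Matrix.one_mulVec, one_smul]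
  have f1 : ((1 : Matrix (Fin 4) (Fin 4) ℚ)).map S16.c *ᵥ S16.ff = (1:ℂ) • S16.ff := by
    rw [Matrix.map_one S16.c (by norm_num) (by norm_num), Matrix.one_mulVec, one_smul]
  have e2 : ((xD^2).map S16.c) *ᵥ S16.ee = (-1:ℂ) • S16.ee := by rw [S16.x2e, neg_one_smul]
  have f2 : ((xD^2).map S16.c) *ᵥ S16.ff = (-1:ℂ) • S16.ff := by rw [S16.x2f, neg_one_smul]
  have e3 : (yD.map S16.c) *ᵥ S16.ee = (1:ℂ) • S16.ee := by rw [S16.ye, one_smul]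
  have f3 : (yD.map S16.c) *ᵥ S16.ff = (-1:ℂ) • S16.ff := by rw [S16.yf, neg_one_smul]
  have e4 : ((xD^2*yD).map S16.c) *ᵥ S16.ee = (-1:ℂ) • S16.ee := by
    rw [S16.map_mul', ← mulVec_mulVec, S16.ye, S16.x2e, neg_one_smul]
  have f4 : ((xD^2*yD).map S16.c) *ᵥ S16.ff = (1:ℂ) • S16.ff := by
    rw [S16.map_mul', ← mulVec_mulVec, S16.yf, Matrix.mulVec_neg, S16.x2f, neg_neg, one_smul]
  have e5 : (xD.map S16.c) *ᵥ S16.ee = (1:ℂ) • S16.ff := by rw [S16.xe, one_smul]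
  have f5 : (xD.map S16.c) *ᵥ S16.ff = (-1:ℂ) • S16.ee := by rw [S16.xf, neg_one_smul]
  have e6 : ((xD^3).map S16.c) *ᵥ S16.ee = (-1:ℂ) • S16.ff := by
    simp [S16.pow3, S16.map_mul', ← mulVec_mulVec, S16.xe, S16.xf, Matrix.mulVec_neg]
  have f6 : ((xD^3).map S16.c) *ᵥ S16.ff = (1:ℂ) • S16.ee := by
    simp [S16.pow3, S16.map_mul', ← mulVec_mulVec, S16.xe, S16.xf, Matrix.mulVec_neg]
  have e7 : ((xD*yD).map S16.c) *ᵥ S16.ee = (1:ℂ) • S16.ff := by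
    simp [S16.map_mul', ← mulVec_mulVec, S16.xe, S16.xf, S16.ye, S16.yf, Matrix.mulVec_neg]
  have f7 : ((xD*yD).map S16.c) *ᵥ S16.ff = (1:ℂ) • S16.ee := by
    simp [S16.map_mul', ← mulVec_mulVec, S16.xe, S16.xf, S16.ye, S16.yf, Matrix.mulVec_neg]
  have e8 : ((xD^3*yD).map S16.c) *ᵥ S16.ee = (-1:ℂ) • S16.ff := by
    simp [S16.pow3, S16.map_mul', ← mulVec_mulVec, S16.xe, S16.xf, S16.ye, S16.yf,
      Matrix.mulVec_neg]
  have f8 : ((xD^3*yD).map S16.c) *ᵥ S16.ff = (-1:ℂ) • S16.ee := by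
    simp [S16.pow3, S16.map_mul', ← mulVec_mulVec, S16.xe, S16.xf, S16.ye, S16.yf,
      Matrix.mulVec_neg]
  -- generator relations
  have hg1 : (sig n 1).map S16.c * P' = P' * !![(1:ℂ),0;0,1] := S16.sigP a 1 1 1 e1 f1
  have hg2 : (sig n (xD^2)).map S16.c * P' = P' * !![(-1:ℂ),0;0,-1] :=
    S16.sigP a (xD^2) (-1) (-1) e2 f2
  have hg3 : (sig n yD).map S16.c * P' = P' * !![(1:ℂ),0;0,-1] := S16.sigP a yD 1 (-1) e3 f3
  have hg4 : (sig n (xD^2*yD)).map S16.c * P' = P' * !![(-1:ℂ),0;0,1] :=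
    S16.sigP a (xD^2*yD) (-1) 1 e4 f4
  have hg5 : (mu A₁ xD).map S16.c * P' = P' * !![0,-1;(a:ℂ),0] := by
    simpa using S16.muP hn a b ha hb A₁ hsum hrow xD 1 (-1) e5 f5
  have hg6 : (mu A₁ (xD^3)).map S16.c * P' = P' * !![0,1;-(a:ℂ),0] := by
    simpa using S16.muP hn a b ha hb A₁ hsum hrow (xD^3) (-1) 1 e6 f6
  have hg7 : (mu A₁ (xD*yD)).map S16.c * P' = P' * !![0,1;(a:ℂ),0] := by
    simpa using S16.muP hn a b ha hb A₁ hsum hrow (xD*yD) 1 1 e7 f7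
  have hg8 : (mu A₁ (xD^3*yD)).map S16.c * P' = P' * !![0,-1;-(a:ℂ),0] := by
    simpa using S16.muP hn a b ha hb A₁ hsum hrow (xD^3*yD) (-1) (-1) e8 f8
  -- invariance of the column space of P'
  have key : ∀ M ∈ Algebra.adjoin ℂ S, ∃ C : Matrix (Fin 2) (Fin 2) ℂ, M * P' = P' * C := by
    intro M hM
    induction hM using Algebra.adjoin_induction with
    | mem x hx =>
      rw [hS] at hx
      simp only [Set.mem_insert_iff, Set.mem_singleton_iff] at hx
      rcases hx with rfl|rfl|rfl|rfl|rfl|rfl|rfl|rfl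
      exacts [⟨_, hg1⟩, ⟨_, hg2⟩, ⟨_, hg3⟩, ⟨_, hg4⟩, ⟨_, hg5⟩, ⟨_, hg6⟩, ⟨_, hg7⟩, ⟨_, hg8⟩]
    | algebraMap r =>
      refine ⟨algebraMap ℂ _ r, ?_⟩
      rw [Algebra.algebraMap_eq_smul_one, Algebra.algebraMap_eq_smul_one, Matrix.smul_mul,
        Matrix.mul_smul, Matrix.one_mul, Matrix.mul_one]
    | add x y hx hy ihx ihy =>
      obtain ⟨C1, h1⟩ := ihx
      obtain ⟨C2, h2⟩ := ihy
      exact ⟨C1 + C2, by rw [Matrix.add_mul, Matrix.mul_add, h1, h2]⟩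
    | mul x y hx hy ihx ihy =>
      obtain ⟨C1, h1⟩ := ihx
      obtain ⟨C2, h2⟩ := ihy
      exact ⟨C1 * C2, by rw [Matrix.mul_assoc, h2, ← Matrix.mul_assoc, h1, Matrix.mul_assoc]⟩
  -- the homomorphism
  let T0 : Algebra.adjoin ℂ S →ₐ[ℂ] Matrix (Fin 2) (Fin 2) ℂ :=
  { toFun := fun u => Q' * ((u : Matrix ((Fin 1 ⊕ Fin (n - 1)) × Fin 4)
      ((Fin 1 ⊕ Fin (n - 1)) × Fin 4) ℂ) * P')
    map_one' := by
      simp only [OneMemClass.coe_one, Matrix.one_mul]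
      exact hQP
    map_mul' := fun u v => by
      obtain ⟨C, hC⟩ := key (v : Matrix ((Fin 1 ⊕ Fin (n - 1)) × Fin 4) ((Fin 1 ⊕ Fin (n - 1)) × Fin 4) ℂ) v.2
      have hTv : Q' * ((v : Matrix ((Fin 1 ⊕ Fin (n - 1)) × Fin 4) ((Fin 1 ⊕ Fin (n - 1)) × Fin 4) ℂ) * P') = C := by
        rw [hC, ← Matrix.mul_assoc, hQP, Matrix.one_mul]
      show Q' * ((↑(u * v) : Matrix ((Fin 1 ⊕ Fin (n - 1)) × Fin 4) ((Fin 1 ⊕ Fin (n - 1)) × Fin 4) ℂ) * P')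
        = (Q' * ((u : Matrix ((Fin 1 ⊕ Fin (n - 1)) × Fin 4) ((Fin 1 ⊕ Fin (n - 1)) × Fin 4) ℂ) * P')) * (Q' * ((v : Matrix ((Fin 1 ⊕ Fin (n - 1)) × Fin 4) ((Fin 1 ⊕ Fin (n - 1)) × Fin 4) ℂ) * P'))
      rw [MulMemClass.coe_mul, hTv]
      simp only [Matrix.mul_assoc]
      rw [hC]
    map_zero' := by
      simp only [ZeroMemClass.coe_zero, Matrix.zero_mul, Matrix.mul_zero]
    map_add' := fun u v => by
      show Q' * ((↑(u + v) : Matrix ((Fin 1 ⊕ Fin (n - 1)) × Fin 4) ((Fin 1 ⊕ Fin (n - 1)) × Fin 4) ℂ) * P')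
        = Q' * ((u : Matrix ((Fin 1 ⊕ Fin (n - 1)) × Fin 4) ((Fin 1 ⊕ Fin (n - 1)) × Fin 4) ℂ) * P') + Q' * ((v : Matrix ((Fin 1 ⊕ Fin (n - 1)) × Fin 4) ((Fin 1 ⊕ Fin (n - 1)) × Fin 4) ℂ) * P')
      rw [AddMemClass.coe_add, Matrix.add_mul, Matrix.mul_add]
    commutes' := fun r => by
      show Q' * ((algebraMap ℂ (Matrix ((Fin 1 ⊕ Fin (n - 1)) × Fin 4)
        ((Fin 1 ⊕ Fin (n - 1)) × Fin 4) ℂ) r) * P') = algebraMap ℂ _ r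
      rw [Algebra.algebraMap_eq_smul_one, Algebra.algebraMap_eq_smul_one, Matrix.smul_mul,
        Matrix.one_mul, Matrix.mul_smul, hQP] }
  have hT0 : ∀ u : Algebra.adjoin ℂ S,
      T0 u = Q' * ((u : Matrix ((Fin 1 ⊕ Fin (n - 1)) × Fin 4) ((Fin 1 ⊕ Fin (n - 1)) × Fin 4) ℂ) * P') := fun _ => rfl
  have hval : ∀ (u : Algebra.adjoin ℂ S)
      (M : Matrix ((Fin 1 ⊕ Fin (n - 1)) × Fin 4) ((Fin 1 ⊕ Fin (n - 1)) × Fin 4) ℂ)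
      (C : Matrix (Fin 2) (Fin 2) ℂ), (u : Matrix ((Fin 1 ⊕ Fin (n - 1)) × Fin 4) ((Fin 1 ⊕ Fin (n - 1)) × Fin 4) ℂ) = M → M * P' = P' * C → T0 u = C := by
    intro u M C hu hM
    rw [hT0, hu, hM, ← Matrix.mul_assoc, hQP, Matrix.one_mul]
  refine ⟨T0, ?_, ?_, ?_, ?_, ?_⟩
  · -- surjectivity
    intro m
    have msy : (sig n yD).map ((↑·) : ℚ → ℂ) ∈ S := by
      rw [hS]
      exact Set.mem_insert_iff.mpr (Or.inr <| Set.mem_insert_iff.mpr <| Or.inr <|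
        Set.mem_insert_iff.mpr <| Or.inl rfl)
    have mmx : (mu A₁ xD).map ((↑·) : ℚ → ℂ) ∈ S := by
      rw [hS]
      exact Set.mem_insert_iff.mpr (Or.inr <| Set.mem_insert_iff.mpr <| Or.inr <|
        Set.mem_insert_iff.mpr <| Or.inr <| Set.mem_insert_iff.mpr <| Or.inr <|
        Set.mem_insert_iff.mpr <| Or.inl rfl)
    set sy : Algebra.adjoin ℂ S := ⟨(sig n yD).map ((↑·) : ℚ → ℂ), Algebra.subset_adjoin msy⟩
      with hsy
    set mx : Algebra.adjoin ℂ S := ⟨(mu A₁ xD).map ((↑·) : ℚ → ℂ), Algebra.subset_adjoin mmx⟩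
      with hmx
    have hTsy : T0 sy = !![(1:ℂ), 0; 0, -1] := hval sy _ _ rfl hg3
    have hTmx : T0 mx = !![(0:ℂ), -1; (a:ℂ), 0] := hval mx _ _ rfl hg5
    set z1 : Algebra.adjoin ℂ S := (2⁻¹ : ℂ) • (1 + sy) with hz1
    set z2 : Algebra.adjoin ℂ S := (2⁻¹ : ℂ) • (1 - sy) with hz2
    have hTz1 : T0 z1 = !![(1:ℂ), 0; 0, 0] := by
      rw [hz1, _root_.map_smul, _root_.map_add, _root_.map_one, hTsy]
      ext i j
      fin_cases i <;> fin_cases j <;> simp [Matrix.one_apply] <;> norm_num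
    have hTz2 : T0 z2 = !![(0:ℂ), 0; 0, 1] := by
      rw [hz2, _root_.map_smul, _root_.map_sub, _root_.map_one, hTsy]
      ext i j
      fin_cases i <;> fin_cases j <;> simp [Matrix.one_apply] <;> norm_num
    have hTz12 : T0 (z1 * mx * z2) = !![(0:ℂ), -1; 0, 0] := by
      rw [_root_.map_mul, _root_.map_mul, hTz1, hTmx, hTz2]
      ext i j
      fin_cases i <;> fin_cases j <;>
        simp [Matrix.mul_apply, Fin.sum_univ_two]
    have hTz21 : T0 (z2 * mx * z1) = !![(0:ℂ), 0; (a:ℂ), 0] := by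
      rw [_root_.map_mul, _root_.map_mul, hTz2, hTmx, hTz1]
      ext i j
      fin_cases i <;> fin_cases j <;>
        simp [Matrix.mul_apply, Fin.sum_univ_two]
    refine ⟨m 0 0 • z1 + m 1 1 • z2 + (-(m 0 1)) • (z1 * mx * z2)
      + ((a:ℂ)⁻¹ * m 1 0) • (z2 * mx * z1), ?_⟩
    simp only [_root_.map_add, _root_.map_smul, hTz1, hTz2, hTz12, hTz21]
    ext i j
    fin_cases i <;> fin_cases j <;>
      simp <;> field_simp
  · intro u hu
    have h := hval u _ _ hu hg1
    rw [h]
    ext i j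
    fin_cases i <;> fin_cases j <;> simp [Matrix.one_apply]
  · intro u hu
    have h := hval u _ _ hu hg2
    rw [h]
    ext i j
    fin_cases i <;> fin_cases j <;> simp [Matrix.one_apply]
  · intro u hu
    exact hval u _ _ hu hg3
  · intro u hu
    exact hval u _ _ hu hg5
end
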